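/- arXiv:math/0111005 — 4 statements merged into one kernel-verified Lean document; each statement's English description precedes it below -/
import Mathlib

section
/- With Q_c the algebra of c-quasi-invariants of a finite Coxeter group W (c a W-invariant function R → ℤ₊), the ring Q_c is a finitely generated ℂ-algebra and its integral closure in its field of fractions equals ℂ[𝔥]. -/
/-!
The quasi-invariants contain the `W`-invariants, and every `f ∈ ℂ[𝔥]` is a root of the monic
polynomial `∏ (X - w • f)` over the orbit of `f`, whose coefficients are invariant. So `ℂ[𝔥]` is
integral, hence module-finite, over `Q_c`, and the Artin–Tate lemma makes `Q_c` a finitely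
generated `ℂ`-algebra. An element of the fraction field integral over `Q_c` is integral over the
integrally closed ring `ℂ[𝔥]`, hence lies in it; conversely `ℂ[𝔥]` is integral over `Q_c`.
-/

open Polynomial

theorem isIntegral_iff_exists_monic_mem_lifts {S K : Type*} [CommRing S] [Ring K] [Nontrivial K]
    [Algebra S K] (z : K) :
    IsIntegral S z ↔ ∃ p : K[X], p.Monic ∧ p ∈ lifts (algebraMap S K) ∧ p.eval z = 0 := by
  constructor
  · rintro ⟨q, hq, hqz⟩
    exact ⟨q.map (algebraMap S K), hq.map _, (mem_lifts _).2 ⟨q, rfl⟩, by rwa [eval_map]⟩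
  · rintro ⟨p, hp, hlifts, hpz⟩
    obtain ⟨q, rfl, -, hq⟩ := lifts_and_degree_eq_and_monic hlifts hp
    exact ⟨q, hq, by rwa [eval_map] at hpz⟩

section

variable {R A : Type*} [CommRing R] [CommRing A] [Algebra R A]

def quasiInvariants {I : Type*} (σ : I → A ≃ₐ[R] A) (J : I → Ideal A) : Subalgebra R A where
  carrier := {f | ∀ i, σ i f - f ∈ J i}
  mul_mem' {a b} ha hb i := by
    have h : σ i (a * b) - a * b = σ i a * (σ i b - b) + (σ i a - a) * b := by
      rw [map_mul]; ring
    exact h ▸ add_mem ((J i).mul_mem_left _ (hb i)) ((J i).mul_mem_right _ (ha i))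
  add_mem' {a b} ha hb i := by
    have h : σ i (a + b) - (a + b) = (σ i a - a) + (σ i b - b) := by rw [map_add]; ring
    exact h ▸ add_mem (ha i) (hb i)
  algebraMap_mem' r i := by simp

theorem mem_quasiInvariants_of_forall_eq {I : Type*} {σ : I → A ≃ₐ[R] A} {J : I → Ideal A}
    {f : A} (hf : ∀ i, σ i f = f) : f ∈ quasiInvariants σ J := fun i => by simp [hf i]

namespace Subalgebra

theorem range_algebraMap_eq_image {K : Type*} [CommRing K] [Algebra A K] (S : Subalgebra R A) :
    Set.range (algebraMap S K) = algebraMap A K '' S := by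
  rw [← Subtype.range_coe (s := (S : Set A)), ← Set.range_comp]; rfl

theorem algebra_isIntegral_of_invariants_mem {G : Type*} [Group G] [Fintype G]
    [MulSemiringAction G A] (S : Subalgebra R A) (hS : ∀ f : A, (∀ g : G, g • f = f) → f ∈ S) :
    Algebra.IsIntegral S A where
  isIntegral f := by
    nontriviality A
    refine (isIntegral_iff_exists_monic_mem_lifts f).2
      ⟨prodXSubSMul G A f, prodXSubSMul.monic G A f, ?_, prodXSubSMul.eval G A f⟩
    exact (lifts_iff_coeff_lifts _).2 fun j =>
      ⟨⟨_, hS _ fun g => prodXSubSMul.coeff G A f g j⟩, rfl⟩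

theorem fg_of_algebra_isIntegral [IsNoetherianRing R] [Algebra.FiniteType R A] (S : Subalgebra R A)
    [Algebra.IsIntegral S A] : S.FG := by
  have : Algebra.FiniteType S A := .of_restrictScalars_finiteType R S A
  have : Module.Finite S A := Algebra.IsIntegral.finite
  exact S.fg_top.1 <| fg_of_fg_of_fg R S A Algebra.FiniteType.out Module.Finite.fg_top
    Subtype.val_injective

theorem isIntegral_iff_mem_range [IsDomain A] [IsIntegrallyClosed A] {K : Type*} [Field K]
    [Algebra A K] [IsFractionRing A K] (S : Subalgebra R A) [Algebra.IsIntegral S A] (z : K) :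
    IsIntegral S z ↔ z ∈ Set.range (algebraMap A K) :=
  ⟨fun hz => IsIntegrallyClosed.isIntegral_iff.1 hz.tower_top,
    fun hz => isIntegral_trans z (IsIntegrallyClosed.isIntegral_iff.2 hz)⟩

end Subalgebra

end

theorem quasi_invariants_finitely_generated_and_normalization_general
    (n : ℕ) {W : Type*} [Group W] [Fintype W]
    (ρ : W →* (MvPolynomial (Fin n) ℂ ≃ₐ[ℂ] MvPolynomial (Fin n) ℂ))
    {I : Type*}
    (α : I → MvPolynomial (Fin n) ℂ) (s : I → W) (c : I → ℕ)
    (Q : Set (MvPolynomial (Fin n) ℂ))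
    (hQ : Q = {f | ∀ i : I,
      ρ (s i) f - f ∈ Ideal.span {α i ^ (2 * c i + 1)}}) :
    -- `Q_c` is a finitely generated `ℂ`-algebra:
    (∃ T : Finset (MvPolynomial (Fin n) ℂ),
      Q = (Algebra.adjoin ℂ (T : Set (MvPolynomial (Fin n) ℂ)) :
        Subalgebra ℂ (MvPolynomial (Fin n) ℂ))) ∧
    -- the integral closure of `Q_c` in the fraction field equals `ℂ[𝔥]`:
    (∀ z : FractionRing (MvPolynomial (Fin n) ℂ),
      (∃ p : Polynomial (FractionRing (MvPolynomial (Fin n) ℂ)),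
          p.Monic ∧
          (∀ j, p.coeff j ∈
            (algebraMap (MvPolynomial (Fin n) ℂ)
              (FractionRing (MvPolynomial (Fin n) ℂ))) '' Q) ∧
          Polynomial.eval z p = 0) ↔
        z ∈ Set.range
          (algebraMap (MvPolynomial (Fin n) ℂ)
            (FractionRing (MvPolynomial (Fin n) ℂ)))) := by
  let Qc := quasiInvariants (fun i => ρ (s i)) fun i => Ideal.span {α i ^ (2 * c i + 1)}
  obtain rfl : Q = Qc := hQ
  let : MulSemiringAction W (MvPolynomial (Fin n) ℂ) := .compHom _ ρ
  have : Algebra.IsIntegral Qc (MvPolynomial (Fin n) ℂ) :=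
    Qc.algebra_isIntegral_of_invariants_mem fun f hf =>
      mem_quasiInvariants_of_forall_eq fun i => hf (s i)
  refine ⟨?_, fun z => ?_⟩
  · obtain ⟨T, hT⟩ := Qc.fg_of_algebra_isIntegral
    exact ⟨T, congrArg SetLike.coe hT.symm⟩
  · rw [← Qc.isIntegral_iff_mem_range, isIntegral_iff_exists_monic_mem_lifts,
      ← Qc.range_algebraMap_eq_image]
    simp only [lifts_iff_coeff_lifts]

/-- Let `Q_c ⊆ ℂ[𝔥] = ℂ[x₁,…,x_n]` be the algebra of `c`-quasi-invariants of a
finite Coxeter group `W` (with `c : I → ℕ` a `W`-invariant multiplicity function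
on the root system).  Then `Q_c` is a finitely generated `ℂ`-algebra, and its
integral closure in its field of fractions (= the field of fractions of `ℂ[𝔥]`)
equals `ℂ[𝔥]` : every element of the fraction field integral over `Q_c` lies in
`ℂ[𝔥]`, and conversely. -/
theorem quasi_invariants_finitely_generated_and_normalization
    (n : ℕ) {W : Type*} [Group W] [Fintype W]
    (ρ : W →* (MvPolynomial (Fin n) ℂ ≃ₐ[ℂ] MvPolynomial (Fin n) ℂ))
    {I : Type*} [Fintype I] [MulAction W I]
    (α : I → MvPolynomial (Fin n) ℂ) (s : I → W) (c : I → ℕ)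
    (hα1 : ∀ i, (α i).IsHomogeneous 1) (hα0 : ∀ i, α i ≠ 0)
    (hrefl : ∀ i, ρ (s i) (α i) = - α i)
    (hs2 : ∀ i, s i * s i = 1)
    (hroots : ∀ (w : W) (i : I), ρ w (α i) = α (w • i))
    (hconj : ∀ (w : W) (i : I), s (w • i) = w * s i * w⁻¹)
    (hcinv : ∀ (w : W) (i : I), c (w • i) = c i)
    (Q : Set (MvPolynomial (Fin n) ℂ))
    (hQ : Q = {f | ∀ i : I,
      ρ (s i) f - f ∈ Ideal.span {α i ^ (2 * c i + 1)}}) :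
    -- `Q_c` is a finitely generated `ℂ`-algebra:
    (∃ T : Finset (MvPolynomial (Fin n) ℂ),
      Q = (Algebra.adjoin ℂ (T : Set (MvPolynomial (Fin n) ℂ)) :
        Subalgebra ℂ (MvPolynomial (Fin n) ℂ))) ∧
    -- the integral closure of `Q_c` in the fraction field equals `ℂ[𝔥]`:
    (∀ z : FractionRing (MvPolynomial (Fin n) ℂ),
      (∃ p : Polynomial (FractionRing (MvPolynomial (Fin n) ℂ)),
          p.Monic ∧
          (∀ j, p.coeff j ∈
            (algebraMap (MvPolynomial (Fin n) ℂ)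
              (FractionRing (MvPolynomial (Fin n) ℂ))) '' Q) ∧
          Polynomial.eval z p = 0) ↔
        z ∈ Set.range
          (algebraMap (MvPolynomial (Fin n) ℂ)
            (FractionRing (MvPolynomial (Fin n) ℂ)))) :=
  quasi_invariants_finitely_generated_and_normalization_general n ρ α s c Q hQ
end

section
/- Let X be an irreducible affine variety over ℂ and A ⊆ ℂ[X] a subalgebra such that ℂ[X] is a finite A-module. Then any nonzero two-sided ideal of the ring of differential operators 𝒟(X) intersects A non-trivially. -/
/-- Differential operators of order at most `n` on a commutative `ℂ`-algebra `B`,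
defined inductively: order `0` operators are multiplications by elements of `B`,
and `u` has order `≤ n+1` if `[u, f]` has order `≤ n` for every multiplication
operator `f`. -/
def diffOpOfOrder (B : Type*) [CommRing B] [Algebra ℂ B] : ℕ → Set (Module.End ℂ B)
  | 0 => {u | ∃ b : B, u = LinearMap.mulLeft ℂ b}
  | n + 1 => {u | ∀ b : B,
      u * LinearMap.mulLeft ℂ b - LinearMap.mulLeft ℂ b * u ∈ diffOpOfOrder B n}

/-- The set of all differential operators on `B`. -/
def diffOps (B : Type*) [CommRing B] [Algebra ℂ B] : Set (Module.End ℂ B) :=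
  {u | ∃ n, u ∈ diffOpOfOrder B n}

/-! An operator of minimal order in a nonzero ideal `J` of `𝒟(B)` commutes with every
multiplication operator, because its commutators with them lie in `J` and have smaller order;
so it is multiplication by some `b ≠ 0`. Since `b` is integral over `A` and `B` is a domain, some
nonzero `a ∈ A` is a multiple `c * b`, and multiplication by `a` is then a left multiple of an
element of `J`. -/

open LinearMap

lemma eq_mulLeft_of_forall_commute {R B : Type*} [CommSemiring R] [CommSemiring B]
    [Algebra R B] {u : Module.End R B} (hu : ∀ b : B, Commute u (mulLeft R b)) :
    u = mulLeft R (u 1) := by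
  ext c
  have hc : u (c * 1) = c * u 1 := LinearMap.congr_fun (hu c) 1
  rw [mul_one] at hc
  rw [hc, mulLeft_apply, mul_comm]

lemma mulLeft_mem_diffOps {B : Type*} [CommRing B] [Algebra ℂ B] (b : B) :
    mulLeft ℂ b ∈ diffOps B :=
  ⟨0, b, rfl⟩

lemma exists_mulLeft_mem_of_commutator_mem {B : Type*} [CommRing B] [Algebra ℂ B]
    {J : Set (Module.End ℂ B)} (hJsub : J ⊆ diffOps B)
    (hJcomm : ∀ u ∈ J, ∀ b : B, u * mulLeft ℂ b - mulLeft ℂ b * u ∈ J)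
    (hJne : ∃ u ∈ J, u ≠ 0) :
    ∃ b : B, b ≠ 0 ∧ mulLeft ℂ b ∈ J := by
  obtain ⟨u, huJ, hu0⟩ := hJne
  obtain ⟨n, hun⟩ := hJsub huJ
  induction n generalizing u with
  | zero =>
    obtain ⟨b, rfl⟩ := hun
    exact ⟨b, fun hb => hu0 (by rw [hb, mulLeft_zero_eq_zero]), huJ⟩
  | succ n ih =>
    by_cases hcomm : ∀ b : B, Commute u (mulLeft ℂ b)
    · have hu := eq_mulLeft_of_forall_commute hcomm
      refine ⟨u 1, fun h => hu0 ?_, hu ▸ huJ⟩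
      rw [hu, h, mulLeft_zero_eq_zero]
    · obtain ⟨b, hb⟩ := not_forall.mp hcomm
      exact ih _ (hJcomm u huJ b) (sub_ne_zero.mpr hb) (hun b)

lemma Subalgebra.exists_mem_ne_zero_dvd_of_isIntegral {R S : Type*} [CommRing R] [CommRing S]
    [IsDomain S] [Algebra R S] (A : Subalgebra R S) {x : S} (hx0 : x ≠ 0)
    (hx : IsIntegral A x) : ∃ a ∈ A, a ≠ 0 ∧ x ∣ a := by
  have hcomap := Ideal.comap_ne_bot_of_integral_mem hx0 (Ideal.mem_span_singleton_self x) hx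
  obtain ⟨a, ha, ha0⟩ := (Submodule.ne_bot_iff _).mp hcomap
  exact ⟨a, a.2, fun h => ha0 (Subtype.ext h), Ideal.mem_span_singleton.mp ha⟩

theorem diffop_ideal_meets_subalgebra_general
    {B : Type*} [CommRing B] [IsDomain B] [Algebra ℂ B]
    (A : Subalgebra ℂ B) (hfin : Module.Finite A B)
    (J : Set (Module.End ℂ B))
    (hJsub : J ⊆ diffOps B)
    (hJadd : ∀ u ∈ J, ∀ w ∈ J, u - w ∈ J)
    (hJl : ∀ d ∈ diffOps B, ∀ u ∈ J, d * u ∈ J)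
    (hJr : ∀ d ∈ diffOps B, ∀ u ∈ J, u * d ∈ J)
    (hJne : ∃ u ∈ J, u ≠ 0) :
    ∃ a : B, a ∈ A ∧ a ≠ 0 ∧ LinearMap.mulLeft ℂ a ∈ J := by
  have hJcomm : ∀ u ∈ J, ∀ b : B, u * mulLeft ℂ b - mulLeft ℂ b * u ∈ J := fun u hu b =>
    hJadd _ (hJr _ (mulLeft_mem_diffOps b) u hu) _ (hJl _ (mulLeft_mem_diffOps b) u hu)
  obtain ⟨b, hb0, hbJ⟩ := exists_mulLeft_mem_of_commutator_mem hJsub hJcomm hJne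
  have : Algebra.IsIntegral A B := Algebra.IsIntegral.of_finite A B
  obtain ⟨a, haA, ha0, c, rfl⟩ :=
    A.exists_mem_ne_zero_dvd_of_isIntegral hb0 (Algebra.IsIntegral.isIntegral b)
  refine ⟨b * c, haA, ha0, ?_⟩
  rw [mul_comm, mulLeft_mul]
  exact hJl _ (mulLeft_mem_diffOps c) _ hbJ

/-- Let `X` be an irreducible affine variety over `ℂ` (so `B = ℂ[X]` is a finitely
generated `ℂ`-algebra which is a domain) and `A ⊆ ℂ[X]` a subalgebra such that
`ℂ[X]` is a finite `A`-module.  Then any nonzero two-sided ideal `J` of the ring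
`𝒟(X)` of differential operators intersects `A` nontrivially. -/
theorem diffop_ideal_meets_subalgebra
    {B : Type*} [CommRing B] [IsDomain B] [Algebra ℂ B] [Algebra.FiniteType ℂ B]
    (A : Subalgebra ℂ B) (hfin : Module.Finite A B)
    (J : Set (Module.End ℂ B))
    (hJsub : J ⊆ diffOps B)
    (hJzero : (0 : Module.End ℂ B) ∈ J)
    (hJadd : ∀ u ∈ J, ∀ w ∈ J, u - w ∈ J)
    (hJl : ∀ d ∈ diffOps B, ∀ u ∈ J, d * u ∈ J)
    (hJr : ∀ d ∈ diffOps B, ∀ u ∈ J, u * d ∈ J)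
    (hJne : ∃ u ∈ J, u ≠ 0) :
    ∃ a : B, a ∈ A ∧ a ≠ 0 ∧ LinearMap.mulLeft ℂ a ∈ J :=
  diffop_ideal_meets_subalgebra_general A hfin J hJsub hJadd hJl hJr hJne
end

section
/- Let A be a ring, P a right A-module, B = End_A(P) its endomorphism ring, and P* = Hom_A(P, A). Then P is a finitely generated projective A-module if and only if P·P* = B, where P·P* is the two-sided ideal of B spanned by the endomorphisms x ↦ p·f(x) for p ∈ P, f ∈ P*. -/
/-!
`P·P*` is a left ideal of `End_A(P)`, since `g ∘ (x ↦ p·f(x)) = (x ↦ g(p)·f(x))`, so it is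
everything exactly when it contains the identity, i.e. when `P` has a finite dual basis:
`x = Σᵢ pᵢ·fᵢ(x)` for all `x`. Such a dual basis is the same thing as a factorisation of the
identity of `P` through `Aⁿ`, via `x ↦ (fᵢ(x))ᵢ` and `(aᵢ)ᵢ ↦ Σᵢ pᵢ·aᵢ`, that is, a presentation
of `P` as a direct summand of a finite free module.
-/

open MulOpposite

section RankOne

variable {A : Type*} [Ring A] {P : Type*} [AddCommGroup P] [Module Aᵐᵒᵖ P]

def rankOne (p : P) (f : P →ₗ[Aᵐᵒᵖ] A) : Module.End Aᵐᵒᵖ P :=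
  LinearMap.toSpanSingleton Aᵐᵒᵖ P p ∘ₗ (opLinearEquiv Aᵐᵒᵖ).toLinearMap ∘ₗ f

@[simp]
lemma rankOne_apply (p : P) (f : P →ₗ[Aᵐᵒᵖ] A) (x : P) : rankOne p f x = op (f x) • p :=
  rfl

lemma mul_rankOne (g : Module.End Aᵐᵒᵖ P) (p : P) (f : P →ₗ[Aᵐᵒᵖ] A) :
    g * rankOne p f = rankOne (g p) f := by
  ext x
  simp

lemma zsmul_rankOne (n : ℤ) (p : P) (f : P →ₗ[Aᵐᵒᵖ] A) :
    n • rankOne p f = rankOne (n • p) f := by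
  ext x
  simp

-- `P·P*`
variable (A P) in
def rankOneSpan : AddSubgroup (Module.End Aᵐᵒᵖ P) :=
  AddSubgroup.closure (Set.range (Function.uncurry rankOne))

lemma rankOne_mem_rankOneSpan (p : P) (f : P →ₗ[Aᵐᵒᵖ] A) : rankOne p f ∈ rankOneSpan A P :=
  AddSubgroup.subset_closure ⟨(p, f), rfl⟩

lemma setOf_eq_rankOneSpan :
    AddSubgroup.closure
      {h : Module.End Aᵐᵒᵖ P | ∃ (p : P) (f : P →ₗ[Aᵐᵒᵖ] A), ∀ x : P, h x = op (f x) • p} =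
      rankOneSpan A P := by
  congr 1
  ext h
  simp only [Set.mem_ofPred_eq, Set.mem_range, Prod.exists, Function.uncurry_apply_pair,
    LinearMap.ext_iff, rankOne_apply, eq_comm]

lemma mul_mem_rankOneSpan (g : Module.End Aᵐᵒᵖ P) {h : Module.End Aᵐᵒᵖ P}
    (hh : h ∈ rankOneSpan A P) : g * h ∈ rankOneSpan A P := by
  suffices rankOneSpan A P ≤ (rankOneSpan A P).comap (AddMonoidHom.mulLeft g) from this hh
  rw [rankOneSpan, AddSubgroup.closure_le]
  rintro _ ⟨⟨p, f⟩, rfl⟩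
  change g * rankOne p f ∈ rankOneSpan A P
  exact mul_rankOne g p f ▸ rankOne_mem_rankOneSpan (g p) f

lemma rankOneSpan_eq_top_iff : rankOneSpan A P = ⊤ ↔ 1 ∈ rankOneSpan A P :=
  ⟨fun h ↦ h ▸ AddSubgroup.mem_top _,
    fun h ↦ eq_top_iff.2 fun g _ ↦ mul_one g ▸ mul_mem_rankOneSpan g h⟩

lemma mem_rankOneSpan_iff {h : Module.End Aᵐᵒᵖ P} :
    h ∈ rankOneSpan A P ↔
      ∃ (n : ℕ) (p : Fin n → P) (f : Fin n → P →ₗ[Aᵐᵒᵖ] A), ∑ i, rankOne (p i) (f i) = h := by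
  rw [rankOneSpan, ← Submodule.span_int_eq_addSubgroupClosure, Submodule.mem_toAddSubgroup,
    Submodule.mem_span_set']
  constructor
  · rintro ⟨n, c, q, rfl⟩
    choose pf hpf using fun i ↦ (q i).2
    refine ⟨n, fun i ↦ c i • (pf i).1, fun i ↦ (pf i).2, Finset.sum_congr rfl fun i _ ↦ ?_⟩
    rw [← zsmul_rankOne, ← hpf i]
    rfl
  · rintro ⟨n, p, f, rfl⟩
    exact ⟨n, 1, fun i ↦ ⟨rankOne (p i) (f i), (p i, f i), rfl⟩, by simp⟩

lemma finite_and_projective_of_sum_rankOne_eq_one {n : ℕ} {p : Fin n → P}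
    {f : Fin n → P →ₗ[Aᵐᵒᵖ] A} (hpf : ∑ i, rankOne (p i) (f i) = 1) :
    Module.Finite Aᵐᵒᵖ P ∧ Module.Projective Aᵐᵒᵖ P := by
  let σ : P →ₗ[Aᵐᵒᵖ] Fin n → Aᵐᵒᵖ :=
    LinearMap.pi fun i ↦ (opLinearEquiv Aᵐᵒᵖ).toLinearMap ∘ₗ f i
  let π := Fintype.linearCombination Aᵐᵒᵖ p
  have hπσ : π ∘ₗ σ = LinearMap.id := by
    ext x
    simpa [π, σ, Fintype.linearCombination_apply] using LinearMap.congr_fun hpf x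
  exact ⟨.of_surjective π (LinearMap.surjective_of_comp_eq_id σ π hπσ), .of_split σ π hπσ⟩

lemma exists_sum_rankOne_eq_one [Module.Finite Aᵐᵒᵖ P] [Module.Projective Aᵐᵒᵖ P] :
    ∃ (n : ℕ) (p : Fin n → P) (f : Fin n → P →ₗ[Aᵐᵒᵖ] A), ∑ i, rankOne (p i) (f i) = 1 := by
  obtain ⟨n, π, hπ⟩ := Module.Finite.exists_fin' Aᵐᵒᵖ P
  obtain ⟨σ, hσ⟩ := Module.projective_lifting_property π LinearMap.id hπ
  have hπ_eq : π = Fintype.linearCombination Aᵐᵒᵖ fun i ↦ π (Pi.single i 1) := by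
    refine LinearMap.pi_ext fun i c ↦ ?_
    rw [Fintype.linearCombination_apply_single, ← map_smul, ← Pi.single_smul, smul_eq_mul, mul_one]
  refine ⟨n, fun i ↦ π (Pi.single i 1),
    fun i ↦ (opLinearEquiv Aᵐᵒᵖ).symm.toLinearMap ∘ₗ LinearMap.proj i ∘ₗ σ, ?_⟩
  ext x
  conv_rhs => rw [Module.End.one_apply, ← LinearMap.id_apply (R := Aᵐᵒᵖ) x, ← hσ,
    LinearMap.comp_apply, hπ_eq, Fintype.linearCombination_apply]
  simp

end RankOne

/-- Dual Basis Lemma.  Let `A` be a ring and `P` a right `A`-module (encoded as a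
module over `Aᵐᵒᵖ`), `B = End_A(P)` its endomorphism ring and `P* = Hom_A(P, A)` its
dual.  Then `P` is finitely generated and projective over `A` if and only if
`P·P* = B`, where `P·P*` is the additive span in `B` of the endomorphisms
`x ↦ p·f(x)` for `p ∈ P`, `f ∈ P*`. -/
theorem dual_basis_lemma
    {A : Type*} [Ring A] {P : Type*} [AddCommGroup P] [Module Aᵐᵒᵖ P] :
    (Module.Finite Aᵐᵒᵖ P ∧ Module.Projective Aᵐᵒᵖ P) ↔
      AddSubgroup.closure
        {h : Module.End Aᵐᵒᵖ P | ∃ (p : P) (f : P →ₗ[Aᵐᵒᵖ] A),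
          ∀ x : P, h x = op (f x) • p} = ⊤ := by
  rw [setOf_eq_rankOneSpan, rankOneSpan_eq_top_iff, mem_rankOneSpan_iff]
  constructor
  · rintro ⟨_, _⟩
    exact exists_sum_rankOne_eq_one
  · rintro ⟨n, p, f, hpf⟩
    exact finite_and_projective_of_sum_rankOne_eq_one hpf
end

section
/- Let 𝔤 = 𝔫₋ ⊕ 𝔥 ⊕ 𝔫₊ = 𝔰𝔩₂(ℂ) with standard basis (e, h, f). Let V be a 𝔰𝔩₂(ℂ)-module such that for every v ∈ V the subspaces ℂ[e]·v and ℂ[f]·v are finite dimensional. Then V is a locally finite 𝔰𝔩₂(ℂ)-module, i.e., every v ∈ V lies in a finite-dimensional 𝔰𝔩₂(ℂ)-submodule. -/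
open Polynomial Submodule

namespace Sl2Aux

variable {V : Type*} [AddCommGroup V] [Module ℂ V]

/-- `D F S = Σ_k F^k S`, the smallest `F`-stable subspace containing `S`. -/
noncomputable def D (F : Module.End ℂ V) (S : Submodule ℂ V) : Submodule ℂ V :=
  ⨆ k : ℕ, S.map (F ^ k)

lemma mem_D {F : Module.End ℂ V} {S : Submodule ℂ V} {x : V} (hx : x ∈ S) (k : ℕ) :
    (F ^ k) x ∈ D F S :=
  le_iSup (fun k => S.map (F ^ k)) k (Submodule.mem_map_of_mem hx)

lemma le_D (F : Module.End ℂ V) (S : Submodule ℂ V) : S ≤ D F S := fun x hx => by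
  simpa using mem_D hx 0

lemma F_mem_D {F : Module.End ℂ V} {S : Submodule ℂ V} {x : V} (hx : x ∈ D F S) :
    F x ∈ D F S := by
  refine Submodule.iSup_induction (motive := fun y => F y ∈ D F S) _ hx ?_ (by simp) ?_
  · rintro k y ⟨z, hz, rfl⟩
    have : F ((F ^ k) z) = (F ^ (k + 1)) z := by
      rw [pow_succ']; rfl
    rw [this]
    exact mem_D hz (k + 1)
  · intro a b ha hb
    rw [map_add]; exact add_mem ha hb

lemma pow_mem_of {F : Module.End ℂ V} {T : Submodule ℂ V} (hT : ∀ x ∈ T, F x ∈ T) :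
    ∀ (k : ℕ), ∀ x ∈ T, (F ^ k) x ∈ T := by
  intro k
  induction k with
  | zero => intro x hx; simpa using hx
  | succ k ih =>
    intro x hx
    have : (F ^ (k + 1)) x = F ((F ^ k) x) := by rw [pow_succ']; rfl
    rw [this]; exact hT _ (ih x hx)

lemma aeval_mem_of {F : Module.End ℂ V} {T : Submodule ℂ V} (hT : ∀ x ∈ T, F x ∈ T)
    (p : ℂ[X]) {x : V} (hx : x ∈ T) : (aeval F p) x ∈ T := by
  rw [Polynomial.aeval_eq_sum_range]
  rw [LinearMap.coe_sum, Finset.sum_apply]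
  refine Submodule.sum_mem _ fun i _ => ?_
  rw [LinearMap.smul_apply]
  exact Submodule.smul_mem _ _ (pow_mem_of hT i x hx)

lemma aeval_mem_D {F : Module.End ℂ V} {S : Submodule ℂ V} (p : ℂ[X]) {x : V} (hx : x ∈ S) :
    (aeval F p) x ∈ D F S :=
  aeval_mem_of (fun _ hy => F_mem_D hy) p (le_D F S hx)

lemma D_fd (F : Module.End ℂ V) (S : Submodule ℂ V) [FiniteDimensional ℂ S]
    (hF : ∀ w : V, FiniteDimensional ℂ
      (span ℂ (Set.range fun k : ℕ => (F ^ k) w))) :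
    FiniteDimensional ℂ (D F S) := by
  obtain ⟨s, hs⟩ : S.FG := (Submodule.fg_iff_finiteDimensional S).mpr ‹_›
  haveI : ∀ w : ↥s, FiniteDimensional ℂ
      (span ℂ (Set.range fun k : ℕ => (F ^ k) (w : V))) := fun w => hF w
  set T : Submodule ℂ V := ⨆ w : ↥s, span ℂ (Set.range fun k : ℕ => (F ^ k) (w : V)) with hT
  have hle : D F S ≤ T := by
    refine iSup_le fun k => Submodule.map_le_iff_le_comap.mpr ?_
    rw [← hs]
    refine Submodule.span_le.mpr fun w hw => ?_
    exact Submodule.mem_comap.mpr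
      (le_iSup (fun w : ↥s => span ℂ (Set.range fun k : ℕ => (F ^ k) (w : V))) ⟨w, hw⟩
        (Submodule.subset_span ⟨k, rfl⟩))
  exact Submodule.finiteDimensional_of_le hle

lemma exists_ann (F : Module.End ℂ V)
    (hF : ∀ w : V, FiniteDimensional ℂ
      (span ℂ (Set.range fun k : ℕ => (F ^ k) w))) (w : V) :
    ∃ p : ℂ[X], p ≠ 0 ∧ (aeval F p) w = 0 := by
  haveI := hF w
  set S := span ℂ (Set.range fun k : ℕ => (F ^ k) w) with hS
  have hmem : ∀ k : ℕ, (F ^ k) w ∈ S := fun k => Submodule.subset_span ⟨k, rfl⟩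
  have hnli : ¬ LinearIndependent ℂ (fun k : ℕ => (⟨(F ^ k) w, hmem k⟩ : S)) :=
    Module.Finite.not_linearIndependent_of_infinite _
  rw [linearIndependent_iff'] at hnli
  push_neg at hnli
  obtain ⟨t, g, hsum, j, hjt, hgj⟩ := hnli
  refine ⟨∑ i ∈ t, C (g i) * X ^ i, ?_, ?_⟩
  · intro hp0
    apply hgj
    have : (∑ i ∈ t, C (g i) * X ^ i).coeff j = 0 := by rw [hp0]; simp
    rwa [finset_sum_coeff, Finset.sum_eq_single j
      (fun i _ hij => by simp [coeff_C_mul, coeff_X_pow, Ne.symm hij])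
      (fun hj => absurd hjt hj), coeff_C_mul, coeff_X_pow, if_pos rfl, mul_one] at this
  · have := congrArg (Subtype.val) hsum
    simpa [map_sum, Submodule.coe_sum] using this

variable {E F H : Module.End ℂ V}

lemma HFpow (hHF : H * F = F * H - (2:ℂ) • F) :
    ∀ k : ℕ, H * F ^ k = F ^ k * H - ((2 * k : ℂ)) • F ^ k := by
  intro k
  induction k with
  | zero => simp
  | succ k ih =>
    have : H * F ^ (k+1) = F * (F ^ k * H - (2 * k : ℂ) • F ^ k) - (2:ℂ) • (F * F ^ k) := by
      rw [← ih, pow_succ', ← mul_assoc, hHF, sub_mul, smul_mul_assoc, mul_assoc]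
    rw [this, mul_sub, ← mul_assoc, ← pow_succ', mul_smul_comm, ← pow_succ']
    push_cast
    module

lemma EFpow (hEF : E * F = F * E + H) (hHF : H * F = F * H - (2:ℂ) • F) :
    ∀ k : ℕ, E * F ^ (k+1) =
      F ^ (k+1) * E + ((k:ℂ)+1) • (F ^ k * H) - (((k:ℂ)+1) * k) • F ^ k := by
  intro k
  induction k with
  | zero => simpa using hEF
  | succ k ih =>
    have h1 : E * F ^ (k+2) = F * (E * F ^ (k+1)) + H * F ^ (k+1) := by
      rw [pow_succ' F (k+1), ← mul_assoc, hEF, add_mul, mul_assoc]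
    rw [h1, ih, HFpow hHF (k+1), mul_sub, mul_add, ← mul_assoc, ← pow_succ',
      mul_smul_comm, ← mul_assoc, ← pow_succ', mul_smul_comm, ← pow_succ']
    push_cast
    module

lemma aeval_monomial_smul (m : ℕ) (c : ℂ) :
    aeval F (monomial m c) = c • F ^ m := by
  rw [aeval_monomial, ← Algebra.smul_def]

lemma Ecomm (hEF : E * F = F * E + H) (hHF : H * F = F * H - (2:ℂ) • F) (p : ℂ[X]) :
    E * aeval F p = aeval F p * E + aeval F (derivative p) * H
      - aeval F (X * derivative (derivative p)) := by
  induction p using Polynomial.induction_on' with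
  | add p q hp hq =>
    simp only [map_add, add_mul, mul_add] at *
    rw [hp, hq]
    abel
  | monomial n a =>
    cases n with
    | zero =>
      simp [aeval_monomial_smul, derivative_monomial, smul_mul_assoc, mul_smul_comm,
        Algebra.commutes]
    | succ n =>
      cases n with
      | zero =>
        simp only [aeval_monomial_smul, derivative_monomial, Nat.cast_one, mul_one,
          Nat.cast_zero, mul_zero, pow_one, pow_zero, Nat.zero_sub, monomial_zero_right,
          map_zero, mul_smul_comm, smul_mul_assoc, one_mul, sub_zero, Nat.sub_self,
          zero_add, pow_one]
        rw [hEF]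
        module
      | succ n =>
        rw [derivative_monomial, derivative_monomial]
        have h2 : n + 1 + 1 - 1 = n + 1 := rfl
        have h3 : n + 1 - 1 = n := rfl
        rw [h2, h3, X_mul_monomial]
        simp only [aeval_monomial_smul, mul_smul_comm, smul_mul_assoc]
        rw [EFpow hEF hHF (n+1)]
        push_cast
        module

set_option maxHeartbeats 1000000 in
theorem engine (E F H : Module.End ℂ V)
    (hEF : E * F = F * E + H)
    (hHE : H * E = E * H + (2:ℂ) • E)
    (hHF : H * F = F * H - (2:ℂ) • F)
    (hEfd : ∀ w : V, FiniteDimensional ℂ (span ℂ (Set.range fun k : ℕ => (E ^ k) w)))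
    (hFfd : ∀ w : V, FiniteDimensional ℂ (span ℂ (Set.range fun k : ℕ => (F ^ k) w)))
    (v : V) :
    ∃ U : Submodule ℂ V, v ∈ U ∧ FiniteDimensional ℂ U ∧
      (∀ x ∈ U, E x ∈ U) ∧ (∀ x ∈ U, F x ∈ U) ∧ (∀ x ∈ U, H x ∈ U) := by
  classical
  set A : Submodule ℂ V := span ℂ (Set.range fun c : ℕ => (E ^ c) v) with hA
  haveI hAfd : FiniteDimensional ℂ A := hEfd v
  have hvA : v ∈ A := subset_span ⟨0, by simp⟩
  have hEA : ∀ x ∈ A, E x ∈ A := by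
    intro x hx
    induction hx using Submodule.span_induction with
    | mem y hy =>
      obtain ⟨c, rfl⟩ := hy
      refine subset_span ⟨c + 1, ?_⟩
      show (E ^ (c+1)) v = E ((E ^ c) v)
      rw [pow_succ']; rfl
    | zero => simp
    | add x y hx hy ihx ihy => rw [map_add]; exact add_mem ihx ihy
    | smul a x hx ihx => rw [map_smul]; exact smul_mem _ _ ihx
  set P : ℕ → Submodule ℂ V := fun b => ⨆ i : Fin b, A.map (H ^ (i : ℕ)) with hP
  set N : ℕ → Submodule ℂ V := fun b => D F (P b) with hN
  have hMP : ∀ (i b : ℕ), i < b → A.map (H ^ i) ≤ P b := fun i b hib =>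
    le_iSup (fun j : Fin b => A.map (H ^ (j : ℕ))) ⟨i, hib⟩
  have hPmono : ∀ {b b' : ℕ}, b ≤ b' → P b ≤ P b' := fun {b b'} hbb =>
    iSup_le fun i => hMP i b' (lt_of_lt_of_le i.2 hbb)
  have hPN : ∀ b, P b ≤ N b := fun b => le_D F (P b)
  haveI hPfd : ∀ b, FiniteDimensional ℂ (P b) := fun b => inferInstance
  haveI hNfd : ∀ b, FiniteDimensional ℂ (N b) := fun b => D_fd F (P b) hFfd
  have hHiA : ∀ (i b : ℕ), i < b → ∀ z ∈ A, (H ^ i) z ∈ P b := fun i b hib z hz =>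
    hMP i b hib (Submodule.mem_map_of_mem hz)
  have hAP : ∀ (b : ℕ), 1 ≤ b → ∀ z ∈ A, z ∈ P b := by
    intro b hb z hz
    simpa using hHiA 0 b (by omega) z hz
  have hHP : ∀ (b : ℕ), ∀ x ∈ P b, H x ∈ P (b + 1) := by
    intro b x hx
    refine Submodule.iSup_induction (motive := fun y => H y ∈ P (b+1)) _ hx ?_ (by simp) ?_
    · rintro i y ⟨z, hz, rfl⟩
      have : H ((H ^ (i:ℕ)) z) = (H ^ ((i:ℕ) + 1)) z := by rw [pow_succ']; rfl
      rw [this]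
      exact hHiA _ _ (by omega) z hz
    · intro y y' hy hy'; rw [map_add]; exact add_mem hy hy'
  have hEHi : ∀ (i : ℕ), ∀ z ∈ A, E ((H ^ i) z) ∈ P (i + 1) := by
    intro i
    induction i with
    | zero =>
      intro z hz
      simpa using hHiA 0 1 (by omega) (E z) (hEA z hz)
    | succ i ih =>
      intro z hz
      have hEH : E * H = H * E - (2:ℂ) • E := by
        rw [hHE]; abel
      have hstep : E ((H ^ (i+1)) z) = H (E ((H ^ i) z)) - (2:ℂ) • E ((H ^ i) z) := by
        have h1 : (H ^ (i+1)) z = H ((H ^ i) z) := by rw [pow_succ']; rfl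
        calc E ((H ^ (i+1)) z) = (E * H) ((H ^ i) z) := by rw [h1]; rfl
        _ = (H * E - (2:ℂ) • E) ((H ^ i) z) := by rw [hEH]
        _ = H (E ((H ^ i) z)) - (2:ℂ) • E ((H ^ i) z) := by
            simp [LinearMap.sub_apply, LinearMap.smul_apply, Module.End.mul_apply]
      rw [hstep]
      exact sub_mem (hHP _ _ (ih z hz)) (smul_mem _ _ (hPmono (by omega) (ih z hz)))
  have hFN : ∀ (b : ℕ), ∀ x ∈ N b, F x ∈ N b := fun b x hx => F_mem_D hx
  have hFkN : ∀ (b k : ℕ), ∀ x ∈ N b, (F ^ k) x ∈ N b := fun b => pow_mem_of (hFN b)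
  have hEP : ∀ (b : ℕ), ∀ x ∈ P b, ∀ k : ℕ, E ((F ^ k) x) ∈ N (b + 1) := by
    intro b x hx
    refine Submodule.iSup_induction
      (motive := fun y => ∀ k : ℕ, E ((F ^ k) y) ∈ N (b+1)) _ hx ?_ ?_ ?_
    · rintro i y ⟨z, hz, rfl⟩ k
      have hExP : E ((H ^ (i:ℕ)) z) ∈ P (b+1) := hPmono (by omega) (hEHi (i:ℕ) z hz)
      have hHxP : H ((H ^ (i:ℕ)) z) ∈ P (b+1) := by
        have : H ((H ^ (i:ℕ)) z) = (H ^ ((i:ℕ)+1)) z := by rw [pow_succ']; rfl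
        rw [this]; exact hHiA _ _ (by omega) z hz
      have hxP : (H ^ (i:ℕ)) z ∈ P (b+1) := hHiA _ _ (by omega) z hz
      cases k with
      | zero => simpa using hPN _ hExP
      | succ k =>
        have hap : E ((F ^ (k+1)) ((H ^ (i:ℕ)) z)) =
            (F ^ (k+1)) (E ((H ^ (i:ℕ)) z)) + ((k:ℂ)+1) • ((F ^ k) (H ((H ^ (i:ℕ)) z)))
              - (((k:ℂ)+1) * k) • ((F ^ k) ((H ^ (i:ℕ)) z)) := by
          have := congrArg (fun (G : Module.End ℂ V) => G ((H ^ (i:ℕ)) z)) (EFpow hEF hHF k)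
          simpa [Module.End.mul_apply, LinearMap.add_apply, LinearMap.sub_apply,
            LinearMap.smul_apply] using this
        rw [hap]
        exact sub_mem (add_mem (mem_D hExP (k+1)) (smul_mem _ _ (mem_D hHxP k)))
          (smul_mem _ _ (mem_D hxP k))
    · intro k; simp
    · intro y y' hy hy' k
      rw [map_add, map_add]; exact add_mem (hy k) (hy' k)
  have hEN : ∀ (b : ℕ), ∀ x ∈ N b, E x ∈ N (b + 1) := by
    intro b x hx
    refine Submodule.iSup_induction (motive := fun y => E y ∈ N (b+1)) _ hx ?_ (by simp) ?_
    · rintro k y ⟨z, hz, rfl⟩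
      exact hEP b z hz k
    · intro y y' hy hy'; rw [map_add]; exact add_mem hy hy'
  -- the annihilating polynomial of `A`
  obtain ⟨s, hsA⟩ : A.FG := (Submodule.fg_iff_finiteDimensional A).mpr hAfd
  choose ann hann0 hannz using exists_ann F hFfd
  set q : ℂ[X] := X * ∏ w ∈ s, ann w with hq
  have hprod0 : (∏ w ∈ s, ann w) ≠ 0 := Finset.prod_ne_zero_iff.mpr fun w _ => hann0 w
  have hq0 : q ≠ 0 := mul_ne_zero X_ne_zero hprod0
  have hqdeg : 1 ≤ q.natDegree := by
    rw [hq, natDegree_mul X_ne_zero hprod0, natDegree_X]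
    omega
  have hqA : ∀ z ∈ A, (aeval F q) z = 0 := by
    have hker : A ≤ LinearMap.ker (aeval F q) := by
      rw [← hsA]
      refine Submodule.span_le.mpr fun w hw => ?_
      have hdvd : ann w ∣ q := Dvd.dvd.mul_left (Finset.dvd_prod_of_mem ann hw) X
      obtain ⟨r, hr⟩ := hdvd
      have : aeval F q = aeval F r * aeval F (ann w) := by
        rw [hr, mul_comm (ann w) r, map_mul]
      simp [SetLike.mem_coe, LinearMap.mem_ker, this, Module.End.mul_apply, hannz w]
    exact fun z hz => LinearMap.mem_ker.mp (hker hz)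
  have key : ∀ (b : ℕ), ∀ z ∈ A,
      (aeval F (derivative^[b+1] q)) ((H ^ (b+1)) z) ∈ N (b + 1) := by
    intro b
    induction b with
    | zero =>
      intro z hz
      have h2 := congrArg (fun (G : Module.End ℂ V) => G z) (Ecomm hEF hHF q)
      simp only [Module.End.mul_apply, LinearMap.add_apply, LinearMap.sub_apply] at h2
      rw [hqA z hz, map_zero, hqA (E z) (hEA z hz), zero_add] at h2
      have h3 : (aeval F (derivative q)) (H z) =
          (aeval F (X * derivative (derivative q))) z := sub_eq_zero.mp h2.symm
      rw [Function.iterate_one, zero_add, pow_one, h3]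
      exact aeval_mem_D _ (hAP 1 le_rfl z hz)
    | succ b ih =>
      intro z hz
      set r := derivative^[b+1] q with hr
      set y := (H ^ (b+1)) z with hy
      have hyP : y ∈ P (b+2) := hHiA (b+1) (b+2) (by omega) z hz
      have hw : (aeval F r) y ∈ N (b+1) := ih z hz
      have hEw : E ((aeval F r) y) ∈ N (b+2) := hEN _ _ hw
      have h2 := congrArg (fun (G : Module.End ℂ V) => G y) (Ecomm hEF hHF r)
      simp only [Module.End.mul_apply, LinearMap.add_apply, LinearMap.sub_apply] at h2
      have hEyP : E y ∈ P (b+2) := by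
        rw [hy]
        exact hEHi (b+1) z hz
      have hEy : (aeval F r) (E y) ∈ N (b+2) := aeval_mem_D _ hEyP
      have hXy : (aeval F (X * derivative (derivative r))) y ∈ N (b+2) :=
        aeval_mem_D _ hyP
      have h4 : (aeval F (derivative r)) (H y) =
          E ((aeval F r) y) - (aeval F r) (E y)
            + (aeval F (X * derivative (derivative r))) y := by
        rw [h2]; abel
      have h5 : (H ^ (b+1+1)) z = H y := by rw [hy, pow_succ']; rfl
      rw [Function.iterate_succ_apply', ← hr, h5, h4]
      exact add_mem (sub_mem hEw hEy) hXy
  set B := q.natDegree with hB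
  have hc : (B.factorial : ℂ) * q.coeff B ≠ 0 := by
    refine mul_ne_zero (Nat.cast_ne_zero.mpr B.factorial_ne_zero) ?_
    rw [hB]
    exact leadingCoeff_ne_zero.mpr hq0
  have hqB : derivative^[B] q = C ((B.factorial : ℂ) * q.coeff B) := by
    have hdeg : (derivative^[B] q).natDegree = 0 := by
      have hle := natDegree_iterate_derivative q B
      rw [← hB] at hle
      omega
    rw [eq_C_of_natDegree_eq_zero hdeg, coeff_iterate_derivative]
    simp [Nat.descFactorial_self, nsmul_eq_mul]
  have hHB : ∀ z ∈ A, (H ^ B) z ∈ N B := by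
    intro z hz
    have hBpos : 1 ≤ B := hB ▸ hqdeg
    obtain ⟨b, hb⟩ : ∃ b, B = b + 1 := ⟨B - 1, (Nat.succ_pred_eq_of_pos hBpos).symm⟩
    have hk := key b z hz
    rw [← hb, hqB, aeval_C, Module.algebraMap_end_apply] at hk
    have := Submodule.smul_mem (N B) (((B.factorial : ℂ) * q.coeff B))⁻¹ hk
    rwa [smul_smul, inv_mul_cancel₀ hc, one_smul] at this
  have hHN : ∀ x ∈ N B, H x ∈ N B := by
    intro x hx
    refine Submodule.iSup_induction (motive := fun y => H y ∈ N B) _ hx ?_ (by simp) ?_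
    · rintro k y ⟨x', hx', rfl⟩
      refine Submodule.iSup_induction (motive := fun y => H ((F ^ k) y) ∈ N B) _ hx' ?_ (by simp) ?_
      · rintro i z ⟨w, hw, rfl⟩
        have hHy : H ((H ^ (i:ℕ)) w) ∈ N B := by
          have hstep : H ((H ^ (i:ℕ)) w) = (H ^ ((i:ℕ)+1)) w := by rw [pow_succ']; rfl
          rw [hstep]
          rcases Nat.lt_or_ge ((i:ℕ)+1) B with hlt | hge
          · exact hPN B (hHiA _ _ hlt w hw)
          · have hiB : (i:ℕ) + 1 = B := by have := i.2; omega
            rw [hiB]; exact hHB w hw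
        have hap : H ((F ^ k) ((H ^ (i:ℕ)) w)) =
            (F ^ k) (H ((H ^ (i:ℕ)) w)) - ((2 * k : ℂ)) • (F ^ k) ((H ^ (i:ℕ)) w) := by
          have := congrArg (fun (G : Module.End ℂ V) => G ((H ^ (i:ℕ)) w)) (HFpow hHF k)
          simpa [Module.End.mul_apply, LinearMap.sub_apply, LinearMap.smul_apply] using this
        rw [hap]
        exact sub_mem (hFkN B k _ hHy)
          (smul_mem _ _ (hFkN B k _ (hPN B (hHiA _ _ i.2 w hw))))
      · intro y y' hy hy'; rw [map_add, map_add]; exact add_mem hy hy'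
    · intro y y' hy hy'; rw [map_add]; exact add_mem hy hy'
  have hHbN : ∀ (b : ℕ), ∀ z ∈ A, (H ^ b) z ∈ N B := by
    intro b
    induction b with
    | zero => intro z hz; simpa using hPN B (hAP B hqdeg z hz)
    | succ b ih =>
      intro z hz
      have : (H ^ (b+1)) z = H ((H ^ b) z) := by rw [pow_succ']; rfl
      rw [this]; exact hHN _ (ih z hz)
  have hEB : ∀ x ∈ N B, E x ∈ N B := by
    intro x hx
    refine Submodule.iSup_induction (motive := fun y => E y ∈ N B) _ hx ?_ (by simp) ?_
    · rintro k y ⟨x', hx', rfl⟩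
      refine Submodule.iSup_induction (motive := fun y => E ((F ^ k) y) ∈ N B) _ hx' ?_ (by simp) ?_
      · rintro i z ⟨w, hw, rfl⟩
        have hEz : E ((H ^ (i:ℕ)) w) ∈ P B := by
          have := hEHi (i:ℕ) w hw
          exact hPmono (by have := i.2; omega) this
        cases k with
        | zero => simpa using hPN B hEz
        | succ k =>
          have hap : E ((F ^ (k+1)) ((H ^ (i:ℕ)) w)) =
              (F ^ (k+1)) (E ((H ^ (i:ℕ)) w)) + ((k:ℂ)+1) • ((F ^ k) (H ((H ^ (i:ℕ)) w)))
                - (((k:ℂ)+1) * k) • ((F ^ k) ((H ^ (i:ℕ)) w)) := by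
            have := congrArg (fun (G : Module.End ℂ V) => G ((H ^ (i:ℕ)) w)) (EFpow hEF hHF k)
            simpa [Module.End.mul_apply, LinearMap.add_apply, LinearMap.sub_apply,
              LinearMap.smul_apply] using this
          have hHw : H ((H ^ (i:ℕ)) w) ∈ N B := by
            have hstep : H ((H ^ (i:ℕ)) w) = (H ^ ((i:ℕ)+1)) w := by rw [pow_succ']; rfl
            rw [hstep]; exact hHbN _ w hw
          rw [hap]
          exact sub_mem (add_mem (hFkN B (k+1) _ (hPN B hEz)) (smul_mem _ _ (hFkN B k _ hHw)))
            (smul_mem _ _ (hFkN B k _ (hPN B (hHiA _ _ i.2 w hw))))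
      · intro y y' hy hy'; rw [map_add, map_add]; exact add_mem hy hy'
    · intro y y' hy hy'; rw [map_add]; exact add_mem hy hy'
  exact ⟨N B, hPN B (hAP B hqdeg v hvA), hNfd B, hEB, hFN B, hHN⟩

end Sl2Aux

attribute [local instance 100] LieRing.ofAssociativeRing

/-- Let `L = 𝔰𝔩₂(ℂ)`, presented as a complex Lie algebra spanned by an
`sl₂`-triple `(h, e, f)`, and let `V` be an `L`-module such that for every
`v ∈ V` the subspaces `ℂ[e]·v` and `ℂ[f]·v` are finite dimensional.  Then `V`
is locally finite: every `v ∈ V` lies in a finite-dimensional `L`-submodule. -/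
theorem sl2_locally_finite
    {L : Type*} [LieRing L] [LieAlgebra ℂ L]
    (h e f : L) (htriple : IsSl2Triple h e f)
    (hspan : Submodule.span ℂ ({h, e, f} : Set L) = ⊤)
    {V : Type*} [AddCommGroup V] [Module ℂ V] [LieRingModule L V] [LieModule ℂ L V]
    (hE : ∀ v : V, FiniteDimensional ℂ
      (Submodule.span ℂ (Set.range fun k : ℕ => ((LieModule.toEnd ℂ L V e) ^ k) v)))
    (hF : ∀ v : V, FiniteDimensional ℂ
      (Submodule.span ℂ (Set.range fun k : ℕ => ((LieModule.toEnd ℂ L V f) ^ k) v))) :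
    ∀ v : V, ∃ W : LieSubmodule ℂ L V, v ∈ W ∧ FiniteDimensional ℂ W := by
  intro v
  set E := LieModule.toEnd ℂ L V e with hEdef
  set F := LieModule.toEnd ℂ L V f with hFdef
  set H := LieModule.toEnd ℂ L V h with hHdef
  have hEF : E * F = F * E + H := by
    have h1 : H = ⁅E, F⁆ := by
      rw [hHdef, hEdef, hFdef, ← LieHom.map_lie (LieModule.toEnd ℂ L V), htriple.lie_e_f]
    rw [h1, Ring.lie_def]
    abel
  have hHE : H * E = E * H + (2:ℂ) • E := by
    have h1 : ⁅H, E⁆ = (2:ℂ) • E := by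
      rw [hHdef, hEdef, ← LieHom.map_lie (LieModule.toEnd ℂ L V), htriple.lie_h_e_nsmul,
        ← Nat.cast_smul_eq_nsmul ℂ 2 e, map_smul]
      norm_num
    rw [← h1, Ring.lie_def]
    abel
  have hHF : H * F = F * H - (2:ℂ) • F := by
    have h1 : ⁅H, F⁆ = -((2:ℂ) • F) := by
      rw [hHdef, hFdef, ← LieHom.map_lie (LieModule.toEnd ℂ L V), htriple.lie_h_f_nsmul,
        ← Nat.cast_smul_eq_nsmul ℂ 2 f, map_neg, map_smul]
      norm_num
    have h2 : H * F - F * H = -((2:ℂ) • F) := by rw [← Ring.lie_def, h1]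
    rw [sub_eq_iff_eq_add] at h2
    rw [h2]
    abel
  obtain ⟨U, hvU, hUfd, hEU, hFU, hHU⟩ := Sl2Aux.engine E F H hEF hHE hHF hE hF v
  have hlie : ∀ (x : L) (m : V), m ∈ U → ⁅x, m⁆ ∈ U := by
    intro x m hm
    have hx : x ∈ Submodule.span ℂ ({h, e, f} : Set L) := by rw [hspan]; trivial
    induction hx using Submodule.span_induction with
    | mem y hy =>
      simp only [Set.mem_insert_iff, Set.mem_singleton_iff] at hy
      rcases hy with rfl | rfl | rfl
      · exact hHU m hm
      · exact hEU m hm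
      · exact hFU m hm
    | zero => rw [zero_lie]; exact U.zero_mem
    | add x y hx hy ihx ihy => rw [add_lie]; exact U.add_mem ihx ihy
    | smul a x hx ihx => rw [smul_lie]; exact U.smul_mem a ihx
  refine ⟨{ toSubmodule := U, lie_mem := fun {x m} hm => hlie x m hm }, hvU, hUfd⟩
end
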